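/- Consider the chain complex 0 → ℤ →^{Φ_2} ℤ^5 →^{Φ_1} ℤ^4 → 0 where Φ_2(1) = (0,1,1,1,1) and Φ_1 sends the first standard basis vector of ℤ^5 to (−1,−1,1,1) and all other four basis vectors to 0. Then H_2 = 0, H_1 ≅ ℤ^3, and H_0 ≅ ℤ^3. (Bredon homology of pm.) -/
import Mathlib

open LinearMap Submodule

noncomputable def Phi2 : ℤ →ₗ[ℤ] (Fin 5 → ℤ) :=
  LinearMap.toSpanSingleton ℤ (Fin 5 → ℤ) ![0, 1, 1, 1, 1]

noncomputable def Phi1 : (Fin 5 → ℤ) →ₗ[ℤ] (Fin 4 → ℤ) :=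
  Matrix.toLin' !![-1, 0, 0, 0, 0; -1, 0, 0, 0, 0; 1, 0, 0, 0, 0; 1, 0, 0, 0, 0]

abbrev H1 : Type := ↥(ker Phi1) ⧸ (Submodule.comap (ker Phi1).subtype (range Phi2))

abbrev H0 : Type := (Fin 4 → ℤ) ⧸ (range Phi1)

noncomputable def Gmap : (Fin 5 → ℤ) →ₗ[ℤ] (Fin 3 → ℤ) :=
  Matrix.toLin' !![0, 1, -1, 0, 0; 0, 0, 1, -1, 0; 0, 0, 0, 1, -1]

noncomputable def Fmap : (Fin 4 → ℤ) →ₗ[ℤ] (Fin 3 → ℤ) :=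
  Matrix.toLin' !![1, 0, 1, 0; 0, 1, 1, 0; 0, 0, -1, 1]

lemma phi1_apply (x : Fin 5 → ℤ) :
    Phi1 x = ![-x 0, -x 0, x 0, x 0] := by
  funext i
  fin_cases i <;>
    simp [Phi1, Matrix.toLin'_apply, Matrix.mulVec, dotProduct, Fin.sum_univ_five, Matrix.vecHead, Matrix.vecTail]

lemma phi2_apply (c : ℤ) : Phi2 c = ![0, c, c, c, c] := by
  funext i
  fin_cases i <;> simp [Phi2, LinearMap.toSpanSingleton_apply] <;> ring

lemma gmap_apply (x : Fin 5 → ℤ) :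
    Gmap x = ![x 1 - x 2, x 2 - x 3, x 3 - x 4] := by
  funext i
  fin_cases i <;>
    simp [Gmap, Matrix.toLin'_apply, Matrix.mulVec, dotProduct, Fin.sum_univ_five] <;> ring

lemma fmap_apply (x : Fin 4 → ℤ) :
    Fmap x = ![x 0 + x 2, x 1 + x 2, -x 2 + x 3] := by
  funext i
  fin_cases i <;>
    simp [Fmap, Matrix.toLin'_apply, Matrix.mulVec, dotProduct, Fin.sum_univ_four] <;> ring

lemma mem_ker_phi1 (x : Fin 5 → ℤ) : x ∈ ker Phi1 ↔ x 0 = 0 := by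
  rw [mem_ker, phi1_apply]
  constructor
  · intro h
    have := congrFun h 2
    simpa using this
  · intro h
    funext i; fin_cases i <;> simp [h]

theorem stmt_9 :
    Subsingleton ↥(ker Phi2) ∧
    Nonempty (H1 ≃ₗ[ℤ] (Fin 3 → ℤ)) ∧
    Nonempty (H0 ≃ₗ[ℤ] (Fin 3 → ℤ)) := by
  refine ⟨?_, ?_, ?_⟩
  · constructor
    rintro ⟨a, ha⟩ ⟨b, hb⟩
    rw [mem_ker] at ha hb
    have ha1 := congrFun ((phi2_apply a) ▸ ha) 1
    have hb1 := congrFun ((phi2_apply b) ▸ hb) 1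
    simp at ha1 hb1
    simp [ha1, hb1]
  · -- H1
    set g : ↥(ker Phi1) →ₗ[ℤ] (Fin 3 → ℤ) := Gmap.comp (ker Phi1).subtype with hg
    have hker : ker g = Submodule.comap (ker Phi1).subtype (range Phi2) := by
      ext ⟨x, hx⟩
      rw [mem_ker_phi1] at hx
      simp only [mem_ker, Submodule.mem_comap, LinearMap.mem_range, hg, LinearMap.comp_apply,
        Submodule.subtype_apply, gmap_apply]
      constructor
      · intro h
        have h0 := congrFun h 0
        have h1 := congrFun h 1
        have h2 := congrFun h 2
        simp at h0 h1 h2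
        refine ⟨x 1, ?_⟩
        rw [phi2_apply]
        funext i; fin_cases i <;> simp [hx] <;> omega
      · rintro ⟨c, rfl⟩
        rw [phi2_apply]
        funext i; fin_cases i <;> simp
    have hsurj : Function.Surjective g := by
      intro y
      have hx : (![0, y 0 + y 1 + y 2, y 1 + y 2, y 2, 0] : Fin 5 → ℤ) ∈ ker Phi1 := by
        rw [mem_ker_phi1]; simp
      refine ⟨⟨_, hx⟩, ?_⟩
      simp only [hg, LinearMap.comp_apply, Submodule.subtype_apply, gmap_apply]
      funext i; fin_cases i <;> simp <;> ring
    exact ⟨(Submodule.quotEquivOfEq _ _ hker.symm).trans (g.quotKerEquivOfSurjective hsurj)⟩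
  · -- H0
    have hker : range Phi1 = ker Fmap := by
      ext x
      simp only [LinearMap.mem_range, mem_ker, fmap_apply]
      constructor
      · rintro ⟨y, rfl⟩
        rw [phi1_apply]
        funext i; fin_cases i <;> simp
      · intro h
        have h0 := congrFun h 0
        have h1 := congrFun h 1
        have h2 := congrFun h 2
        simp at h0 h1 h2
        refine ⟨fun _ => x 2, ?_⟩
        rw [phi1_apply]
        funext i; fin_cases i <;> simp <;> omega
    have hsurj : Function.Surjective Fmap := by
      intro y
      refine ⟨![y 0, y 1, 0, y 2], ?_⟩
      rw [fmap_apply]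
      funext i; fin_cases i <;> simp
    exact ⟨(Submodule.quotEquivOfEq _ _ hker).trans (Fmap.quotKerEquivOfSurjective hsurj)⟩
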